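/- arXiv:math/0011144 — 4 statements merged into one kernel-verified Lean document; each statement's English description precedes it below -/
import Mathlib

section
/- If u : ℝ² → ℂ is a Schwartz function and φ(x,y) = (x / cosh(y/2), sinh(y)), then the composition u ∘ φ is again a Schwartz function on ℝ². -/
/-!
The map `φ` grows exponentially in `y`, so it does not have temperate growth and
`SchwartzMap.compCLM` does not apply. What saves the day is that all quantities can be
controlled polynomially by `1 + ‖φ p‖` instead of `1 + ‖p‖`: `cosh y ≤ 1 + |sinh y|`,
`|y| ≤ |sinh y|` and `|x| ≤ |x / cosh (y/2)| · cosh y`. The derivatives of `sinh` are bounded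
by `cosh`, and those of `x / cosh (y/2)` grow polynomially in `p` (every derivative of `sech` is
`sech · P(tanh)` for a polynomial `P`). Faà di Bruno's bound then gives the Schwartz estimates
for `u ∘ φ`, exactly as in the proof of `SchwartzMap.compCLM`, with the rapid decay of `u`
at `φ p` absorbing every power of `1 + ‖φ p‖`.
-/

open Real Function Polynomial
open scoped SchwartzMap Nat ContDiff

namespace SchwartzMap

variable {D E F : Type*} [NormedAddCommGroup D] [NormedSpace ℝ D] [NormedAddCommGroup E]
  [NormedSpace ℝ E] [NormedAddCommGroup F] [NormedSpace ℝ F]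

/-- Unlike in `SchwartzMap.compCLM`, the derivatives of `g` only need to be polynomially bounded
in `‖g x‖`, so `g` may grow exponentially. -/
noncomputable def compOfImageGrowth (f : 𝓢(E, F)) {g : D → E} (hg : ContDiff ℝ ∞ g)
    (hg_deriv : ∀ n : ℕ, ∃ (l : ℕ) (C : ℝ), ∀ N ≤ n, ∀ x,
      ‖iteratedFDeriv ℝ N g x‖ ≤ C * (1 + ‖g x‖) ^ l)
    (hg_upper : ∃ (k : ℕ) (C : ℝ), ∀ x, ‖x‖ ≤ C * (1 + ‖g x‖) ^ k) : 𝓢(D, F) where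
  toFun := f ∘ g
  smooth' := (f.smooth ⊤).comp hg
  decay' k n := by
    obtain ⟨l, C, hC⟩ := hg_deriv n
    obtain ⟨kg, Cg, hCg⟩ := hg_upper
    let k' := kg * k + l * n
    let S := (Finset.Iic (k', n)).sup (schwartzSeminormFamily ℝ E F) f
    refine ⟨Cg ^ k * (n ! * 2 ^ k' * S * (|C| + 1) ^ n), fun x => ?_⟩
    set G := 1 + ‖g x‖
    have hG : 1 ≤ G := le_add_of_nonneg_right (norm_nonneg _)
    have hf_bound (i) (hi : i ≤ n) : ‖iteratedFDeriv ℝ i f (g x)‖ ≤ 2 ^ k' * S / G ^ k' := by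
      rw [le_div_iff₀' (by positivity)]
      exact one_add_le_sup_seminorm_apply (m := (k', n)) le_rfl hi f (g x)
    have hg_bound (i) (hi₁ : 1 ≤ i) (hi : i ≤ n) :
        ‖iteratedFDeriv ℝ i g x‖ ≤ ((|C| + 1) * G ^ l) ^ i :=
      calc ‖iteratedFDeriv ℝ i g x‖ ≤ C * G ^ l := hC i hi x
        _ ≤ (|C| + 1) * G ^ l := by gcongr; linarith [le_abs_self C]
        _ ≤ ((|C| + 1) * G ^ l) ^ i :=
          le_self_pow₀ (one_le_mul_of_one_le_of_one_le (by linarith [abs_nonneg C])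
            (one_le_pow₀ hG)) (by omega)
    have hcomp := norm_iteratedFDeriv_comp_le (f.smooth ⊤) hg (mod_cast le_top) x hf_bound hg_bound
    have hx : ‖x‖ ^ k ≤ (Cg * G ^ kg) ^ k := pow_le_pow_left₀ (norm_nonneg x) (hCg x) k
    calc ‖x‖ ^ k * ‖iteratedFDeriv ℝ n (f ∘ g) x‖
        ≤ (Cg * G ^ kg) ^ k * (n ! * (2 ^ k' * S / G ^ k') * ((|C| + 1) * G ^ l) ^ n) := by
          gcongr
          exact (pow_nonneg (norm_nonneg x) k).trans hx
      _ = Cg ^ k * (n ! * 2 ^ k' * S * (|C| + 1) ^ n) := by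
          simp only [k', mul_pow, pow_add, ← pow_mul]
          field_simp

end SchwartzMap

namespace Real

theorem hasDerivAt_tanh (x : ℝ) : HasDerivAt tanh (1 - tanh x ^ 2) x := by
  rw [show tanh = sinh / cosh from funext tanh_eq_sinh_div_cosh]
  refine ((hasDerivAt_sinh x).div (hasDerivAt_cosh x) (cosh_pos x).ne').congr_deriv ?_
  rw [Pi.div_apply]
  field_simp

theorem hasDerivAt_inv_cosh (x : ℝ) :
    HasDerivAt (fun x => (cosh x)⁻¹) (-(tanh x * (cosh x)⁻¹)) x := by
  refine ((hasDerivAt_cosh x).inv (cosh_pos x).ne').congr_deriv ?_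
  rw [tanh_eq_sinh_div_cosh]
  field_simp

theorem exists_iteratedDeriv_inv_cosh_eq (n : ℕ) : ∃ P : ℝ[X],
    iteratedDeriv n (fun x => (cosh x)⁻¹) = fun x => (cosh x)⁻¹ * P.eval (tanh x) := by
  induction n with
  | zero => exact ⟨1, by simp⟩
  | succ n ih =>
    obtain ⟨P, hP⟩ := ih
    refine ⟨-X * P + (1 - X ^ 2) * derivative P, funext fun x => ?_⟩
    rw [iteratedDeriv_succ, hP]
    refine ((hasDerivAt_inv_cosh x).mul ((P.hasDerivAt _).comp x (hasDerivAt_tanh x))).deriv.trans ?_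
    simp only [Function.comp_apply, eval_add, eval_mul, eval_neg, eval_X, eval_sub, eval_one,
      eval_pow]
    ring

theorem hasTemperateGrowth_inv_cosh : HasTemperateGrowth fun x : ℝ => (cosh x)⁻¹ := by
  refine ⟨contDiff_cosh.inv fun x => (cosh_pos x).ne', fun n => ?_⟩
  obtain ⟨P, hP⟩ := exists_iteratedDeriv_inv_cosh_eq n
  obtain ⟨C, hC⟩ := (isCompact_Icc (a := (-1 : ℝ)) (b := 1)).exists_bound_of_continuousOn
    P.continuous.continuousOn
  refine ⟨0, C, fun x => ?_⟩
  rw [norm_iteratedFDeriv_eq_norm_iteratedDeriv, hP, pow_zero, mul_one, norm_mul]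
  have h_sech : ‖(cosh x)⁻¹‖ ≤ 1 := by
    rw [norm_inv, Real.norm_of_nonneg (cosh_pos x).le]
    exact inv_le_one_of_one_le₀ (one_le_cosh x)
  have h_poly := hC (tanh x) ⟨(neg_one_lt_tanh x).le, (tanh_lt_one x).le⟩
  calc ‖(cosh x)⁻¹‖ * ‖P.eval (tanh x)‖ ≤ 1 * C := by gcongr
    _ = C := one_mul C

theorem abs_sinh_le_cosh (x : ℝ) : |sinh x| ≤ cosh x := by
  nlinarith [cosh_sq x, sq_abs (sinh x), abs_nonneg (sinh x), cosh_pos x]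

theorem cosh_le_one_add_abs_sinh (x : ℝ) : cosh x ≤ 1 + |sinh x| := by
  nlinarith [cosh_sq x, sq_abs (sinh x), abs_nonneg (sinh x), cosh_pos x]

theorem abs_le_abs_sinh (x : ℝ) : |x| ≤ |sinh x| := by
  rw [abs_sinh]
  exact self_le_sinh_iff.mpr (abs_nonneg x)

theorem norm_iteratedDeriv_sinh_le (n : ℕ) (x : ℝ) : ‖iteratedDeriv n sinh x‖ ≤ cosh x := by
  obtain ⟨m, rfl | rfl⟩ := Nat.even_or_odd' n
  · simpa [iteratedDeriv_even_sinh] using abs_sinh_le_cosh x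
  · simp [abs_of_pos (cosh_pos x)]

end Real

theorem hasTemperateGrowth_fst_div_cosh_half_snd :
    HasTemperateGrowth fun p : ℝ × ℝ => p.1 / cosh (p.2 / 2) := by
  have h := (ContinuousLinearMap.fst ℝ ℝ ℝ).hasTemperateGrowth.mul
    (hasTemperateGrowth_inv_cosh.comp
      ((2 : ℝ)⁻¹ • ContinuousLinearMap.snd ℝ ℝ ℝ).hasTemperateGrowth)
  have e : (fun p : ℝ × ℝ => p.1 / cosh (p.2 / 2)) = ⇑(ContinuousLinearMap.fst ℝ ℝ ℝ) *
      (fun x => (cosh x)⁻¹) ∘ ⇑((2 : ℝ)⁻¹ • ContinuousLinearMap.snd ℝ ℝ ℝ) := by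
    ext p
    simp [div_eq_mul_inv, inv_mul_eq_div]
  rwa [e]

theorem norm_iteratedFDeriv_sinh_snd_le (n : ℕ) (p : ℝ × ℝ) :
    ‖iteratedFDeriv ℝ n (fun q : ℝ × ℝ => sinh q.2) p‖ ≤ cosh p.2 := by
  have h := (ContinuousLinearMap.snd ℝ ℝ ℝ).iteratedFDeriv_comp_right contDiff_sinh p
    (i := n) (mod_cast le_top)
  calc ‖iteratedFDeriv ℝ n (fun q : ℝ × ℝ => sinh q.2) p‖
      ≤ ‖iteratedFDeriv ℝ n sinh p.2‖ * ∏ _ : Fin n, ‖ContinuousLinearMap.snd ℝ ℝ ℝ‖ :=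
        h ▸ ContinuousMultilinearMap.norm_compContinuousLinearMap_le _ _
    _ ≤ cosh p.2 * 1 := by
        gcongr
        · rw [norm_iteratedFDeriv_eq_norm_iteratedDeriv]
          exact norm_iteratedDeriv_sinh_le n p.2
        · exact Finset.prod_le_one (fun _ _ => norm_nonneg _)
            fun _ _ => ContinuousLinearMap.norm_snd_le ..
    _ = cosh p.2 := mul_one _

noncomputable def sechSinhMap (p : ℝ × ℝ) : ℝ × ℝ := (p.1 / cosh (p.2 / 2), sinh p.2)

theorem contDiff_sechSinhMap : ContDiff ℝ ∞ sechSinhMap :=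
  hasTemperateGrowth_fst_div_cosh_half_snd.1.prodMk (contDiff_sinh.comp contDiff_snd)

theorem cosh_snd_le_one_add_norm_sechSinhMap (p : ℝ × ℝ) : cosh p.2 ≤ 1 + ‖sechSinhMap p‖ :=
  (cosh_le_one_add_abs_sinh p.2).trans (by gcongr; exact norm_snd_le (sechSinhMap p))

theorem one_add_norm_le_sechSinhMap (p : ℝ × ℝ) : 1 + ‖p‖ ≤ 2 * (1 + ‖sechSinhMap p‖) ^ 2 := by
  set G := ‖sechSinhMap p‖
  have hG : 0 ≤ G := norm_nonneg _
  have hy : |p.2| ≤ G := (abs_le_abs_sinh p.2).trans (norm_snd_le (sechSinhMap p))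
  have hx : |p.1| ≤ G * (1 + G) := by
    have hc : cosh (p.2 / 2) ≤ 1 + G := by
      refine le_trans ?_ (cosh_snd_le_one_add_norm_sechSinhMap p)
      rw [cosh_le_cosh, abs_div, abs_two]
      linarith [abs_nonneg p.2]
    calc |p.1| = |p.1 / cosh (p.2 / 2)| * cosh (p.2 / 2) := by
          rw [abs_div, abs_of_pos (cosh_pos _), div_mul_cancel₀ _ (cosh_pos _).ne']
      _ ≤ G * (1 + G) := by
          gcongr
          exact norm_fst_le (sechSinhMap p)
  have hp : ‖p‖ ≤ (1 + G) ^ 2 := by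
    rw [Prod.norm_def, Real.norm_eq_abs, Real.norm_eq_abs]
    exact max_le (by nlinarith) (by nlinarith)
  nlinarith

theorem norm_iteratedFDeriv_sechSinhMap_le (n : ℕ) : ∃ (l : ℕ) (C : ℝ), ∀ N ≤ n, ∀ p,
    ‖iteratedFDeriv ℝ N sechSinhMap p‖ ≤ C * (1 + ‖sechSinhMap p‖) ^ l := by
  obtain ⟨k, C, hC0, hC⟩ :=
    hasTemperateGrowth_fst_div_cosh_half_snd.norm_iteratedFDeriv_le_uniform n
  refine ⟨2 * k + 1, C * 2 ^ k + 1, fun N hN p => ?_⟩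
  have hsinh : ContDiff ℝ ∞ fun q : ℝ × ℝ => sinh q.2 := contDiff_sinh.comp contDiff_snd
  have hsplit : ‖iteratedFDeriv ℝ N sechSinhMap p‖ =
      max ‖iteratedFDeriv ℝ N (fun p : ℝ × ℝ => p.1 / cosh (p.2 / 2)) p‖
        ‖iteratedFDeriv ℝ N (fun q : ℝ × ℝ => sinh q.2) p‖ := by
    rw [show sechSinhMap = fun p => (p.1 / cosh (p.2 / 2), sinh p.2) from rfl,
      iteratedFDeriv_prodMk hasTemperateGrowth_fst_div_cosh_half_snd.1.contDiffAt
        hsinh.contDiffAt (mod_cast le_top),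
      ContinuousMultilinearMap.opNorm_prod]
  set G := 1 + ‖sechSinhMap p‖
  have hG : 1 ≤ G := le_add_of_nonneg_right (norm_nonneg _)
  have hG' : 1 ≤ G ^ (2 * k) := one_le_pow₀ hG
  calc ‖iteratedFDeriv ℝ N sechSinhMap p‖
      ≤ C * (1 + ‖p‖) ^ k + G := by
        rw [hsplit]
        exact (max_le_add_of_nonneg (norm_nonneg _) (norm_nonneg _)).trans (add_le_add (hC N hN p)
          ((norm_iteratedFDeriv_sinh_snd_le N p).trans (cosh_snd_le_one_add_norm_sechSinhMap p)))
    _ ≤ C * (2 * G ^ 2) ^ k + G := by grw [one_add_norm_le_sechSinhMap p]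
    _ = C * 2 ^ k * G ^ (2 * k) * 1 + 1 * G := by rw [mul_pow, ← pow_mul]; ring
    _ ≤ C * 2 ^ k * G ^ (2 * k) * G + G ^ (2 * k) * G := by gcongr
    _ = (C * 2 ^ k + 1) * G ^ (2 * k + 1) := by ring

/-- If u is a Schwartz function on ℝ² and φ(x,y) = (x/cosh(y/2), sinh y),
then u ∘ φ is again a Schwartz function on ℝ². -/
theorem stmt2 (u : SchwartzMap (ℝ × ℝ) ℂ) :
    ∃ v : SchwartzMap (ℝ × ℝ) ℂ,
      ∀ p : ℝ × ℝ, v p = u (p.1 / Real.cosh (p.2 / 2), Real.sinh p.2) :=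
  ⟨u.compOfImageGrowth contDiff_sechSinhMap norm_iteratedFDeriv_sechSinhMap_le
    ⟨2, 2, fun p => (le_add_of_nonneg_left zero_le_one).trans (one_add_norm_le_sechSinhMap p)⟩,
    fun _ => rfl⟩
end

section
/- Let g be a real simple Lie algebra with Iwasawa decomposition g = k ⊕ a ⊕ n, where the restriction to the solvable part r = a ⊕ n of a linear form ξ₀ on g satisfies: the 2-form Ω(X,Y) = ξ₀([X,Y]) is nondegenerate on r, and Ω(n, z) = 0 for every z in the center Z(n) of n. Then dim a ≥ dim Z(n). -/
/-- If r = a ⊕ n is a (finite-dimensional real) Lie algebra, ξ₀ a linear form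
such that Ω(X,Y) = ξ₀[X,Y] is nondegenerate on r and Ω(n, Z(n)) = 0, then
dim a ≥ dim Z(n), where Z(n) is the center of n. -/
theorem stmt5 (r : Type*) [LieRing r] [LieAlgebra ℝ r] [Module.Finite ℝ r]
    (a n : LieSubalgebra ℝ r)
    (hcompl : IsCompl (a : Submodule ℝ r) (n : Submodule ℝ r))
    (ξ₀ : r →ₗ[ℝ] ℝ)
    (hnondeg : ∀ X : r, (∀ Y : r, ξ₀ ⁅X, Y⁆ = 0) → X = 0)
    (hcent : ∀ z : n, z ∈ LieAlgebra.center ℝ n → ∀ w : n, ξ₀ ⁅(w : r), (z : r)⁆ = 0) :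
    Module.finrank ℝ (LieAlgebra.center ℝ n) ≤ Module.finrank ℝ a := by
  classical
  -- the bilinear form Ω
  let B : r →ₗ[ℝ] r →ₗ[ℝ] ℝ := LinearMap.mk₂ ℝ (fun x y => ξ₀ ⁅x, y⁆)
    (fun x x' y => by simp [add_lie])
    (fun c x y => by simp [smul_lie])
    (fun x y y' => by simp [lie_add])
    (fun c x y => by simp [lie_smul])
  -- the map Z(n) → a*
  let φ : (LieAlgebra.center ℝ n) →ₗ[ℝ] (a →ₗ[ℝ] ℝ) :=
    { toFun := fun z => (B.flip ((z : n) : r)).comp a.toSubmodule.subtype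
      map_add' := fun z w => by ext x; simp [B, lie_add]
      map_smul' := fun c z => by
        ext x
        show ξ₀ ⁅(x : r), ((c • (z : n) : n) : r)⁆ = c * ξ₀ ⁅(x : r), ((z : n) : r)⁆
        rw [show ((c • (z : n) : n) : r) = c • ((z : n) : r) from rfl, lie_smul, map_smul,
          smul_eq_mul] }
  have hinj : Function.Injective φ := by
    rw [injective_iff_map_eq_zero]
    intro z hz
    have hz' : ∀ x : a, ξ₀ ⁅(x : r), ((z : n) : r)⁆ = 0 := by
      intro x
      have := congrFun (congrArg DFunLike.coe hz) x
      simp [φ, B] at this; exact this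
    have hzero : ((z : n) : r) = 0 := by
      have h0 : (((z : n) : r)) = 0 := by
        apply hnondeg
        intro Y
        have hY : Y ∈ (a : Submodule ℝ r) ⊔ (n : Submodule ℝ r) := by
          rw [hcompl.sup_eq_top]; trivial
        obtain ⟨y1, hy1, y2, hy2, rfl⟩ := Submodule.mem_sup.mp hY
        have h1 : ξ₀ ⁅y1, ((z : n) : r)⁆ = 0 := hz' ⟨y1, hy1⟩
        have h2 : ξ₀ ⁅y2, ((z : n) : r)⁆ = 0 := hcent z z.2 ⟨y2, hy2⟩
        have : ξ₀ ⁅y1 + y2, ((z : n) : r)⁆ = 0 := by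
          rw [add_lie, map_add, h1, h2, add_zero]
        have hskew : ξ₀ ⁅((z : n) : r), y1 + y2⁆ = - ξ₀ ⁅y1 + y2, ((z : n) : r)⁆ := by
          rw [← map_neg, lie_skew]
        rw [hskew, this, neg_zero]
      exact h0
    ext
    exact_mod_cast hzero
  have h1 : Module.finrank ℝ (LieAlgebra.center ℝ n) ≤ Module.finrank ℝ (a →ₗ[ℝ] ℝ) :=
    LinearMap.finrank_le_finrank_of_injective hinj
  have h2 : Module.finrank ℝ (a →ₗ[ℝ] ℝ) = Module.finrank ℝ a :=
    Subspace.dual_finrank_eq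
  omega
end

section
/- The phase function S(x₀,x₁,x₂) = sinh(a₀−a₁)l₂ + sinh(a₁−a₂)l₀ + sinh(a₂−a₀)l₁ on (ℝ²)³, with x_i = (a_i, l_i), is invariant under the diagonal action of the maps τ_{(t,u,v)}(a,l) = (a+t, l + u·cosh(a+t) + v·sinh(a+t)) for all t,u,v ∈ ℝ. -/
/-- The phase S(x₀,x₁,x₂) = ∮ sinh(a₀−a₁)l₂ is invariant under the diagonal
action of τ_{(t,u,v)}(a,l) = (a+t, l + u·cosh(a+t) + v·sinh(a+t)). -/
theorem stmt8 (t u v : ℝ) :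
    let τ : ℝ × ℝ → ℝ × ℝ :=
      fun p => (p.1 + t, p.2 + u * Real.cosh (p.1 + t) + v * Real.sinh (p.1 + t))
    let S : (ℝ × ℝ) → (ℝ × ℝ) → (ℝ × ℝ) → ℝ :=
      fun x₀ x₁ x₂ => Real.sinh (x₀.1 - x₁.1) * x₂.2 + Real.sinh (x₁.1 - x₂.1) * x₀.2
        + Real.sinh (x₂.1 - x₀.1) * x₁.2
    ∀ x₀ x₁ x₂ : ℝ × ℝ, S (τ x₀) (τ x₁) (τ x₂) = S x₀ x₁ x₂ := by
  intro τ S x₀ x₁ x₂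
  simp only [τ, S, add_sub_add_right_eq_sub, Real.sinh_eq, Real.cosh_eq, Real.exp_add,
    Real.exp_sub, Real.exp_neg]
  have h : ∀ a : ℝ, Real.exp a ≠ 0 := fun a => (Real.exp_pos a).ne'
  field_simp
  ring
end

section
/- Let φ : ℝ² → ℝ² be φ(a,α) = (a, (2/ℏ)sinh(ℏα/2)) for a fixed ℏ > 0. Then for every Schwartz function u on ℝ², u ∘ φ is Schwartz, and φ and its inverse are smooth with the inverse's derivatives of polynomial growth. -/
open Real ContinuousLinearMap
open scoped ContDiff

lemma clm_iter_bound {E F : Type*} [NormedAddCommGroup E] [NormedSpace ℝ E]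
    [NormedAddCommGroup F] [NormedSpace ℝ F] (e : E →L[ℝ] F) {n : ℕ} (hn : 1 ≤ n) (x : E) :
    ‖iteratedFDeriv ℝ n (⇑e) x‖ ≤ ‖e‖ := by
  match n, hn with
  | 1, _ =>
    refine ContinuousMultilinearMap.opNorm_le_bound (norm_nonneg e) ?_
    intro m
    rw [iteratedFDeriv_one_apply, e.fderiv]
    calc ‖e (m 0)‖ ≤ ‖e‖ * ‖m 0‖ := e.le_opNorm _
    _ = ‖e‖ * ∏ i, ‖m i‖ := by rw [Fin.prod_univ_one]
  | (n+2), _ =>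
    rw [← norm_iteratedFDeriv_fderiv]
    have : fderiv ℝ (⇑e) = fun _ => e := funext fun y => e.fderiv
    rw [this, iteratedFDeriv_const_of_ne (Nat.succ_ne_zero n)]
    simp [norm_nonneg e]


lemma pair_iter_bound {f : ℝ → ℝ} (hf : ContDiff ℝ ∞ f) {n : ℕ} (hn : 1 ≤ n) (x : ℝ × ℝ) :
    ‖iteratedFDeriv ℝ n (fun p : ℝ × ℝ => (p.1, f p.2)) x‖ ≤ 1 + ‖iteratedDeriv n f x.2‖ := by
  set A : (ℝ × ℝ) →L[ℝ] ℝ × ℝ := (inl ℝ ℝ ℝ).comp (fst ℝ ℝ ℝ) with hA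
  have hAnorm : ‖A‖ ≤ 1 := by
    refine opNorm_le_bound _ zero_le_one fun p => ?_
    have : A p = (p.1, 0) := rfl
    rw [this, one_mul]
    rw [Prod.norm_def]
    simp [norm_fst_le p, le_trans (norm_fst_le p) le_rfl]
    exact norm_fst_le p
  have hB : ContDiff ℝ ∞ (⇑(inr ℝ ℝ ℝ) ∘ f ∘ ⇑(snd ℝ ℝ ℝ)) :=
    (inr ℝ ℝ ℝ).contDiff.comp (hf.comp (snd ℝ ℝ ℝ).contDiff)
  have heq : (fun p : ℝ × ℝ => (p.1, f p.2))
      = fun p => A p + (⇑(inr ℝ ℝ ℝ) ∘ f ∘ ⇑(snd ℝ ℝ ℝ)) p := by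
    funext p
    simp [hA, Prod.ext_iff]
  have hicast : (n : WithTop ℕ∞) ≤ ∞ := by exact_mod_cast le_top
  rw [heq, iteratedFDeriv_add_apply' (A.contDiff.of_le hicast).contDiffAt (hB.of_le hicast).contDiffAt]
  refine le_trans (norm_add_le _ _) (add_le_add (le_trans (clm_iter_bound A hn x) hAnorm) ?_)
  rw [(inr ℝ ℝ ℝ).iteratedFDeriv_comp_left ((hf.comp (snd ℝ ℝ ℝ).contDiff).contDiffAt (x := x)) hicast]
  refine le_trans ((inr ℝ ℝ ℝ).norm_compContinuousMultilinearMap_le _) ?_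
  have h1 : ‖(inr ℝ ℝ ℝ : ℝ →L[ℝ] ℝ × ℝ)‖ ≤ 1 := by
    refine opNorm_le_bound _ zero_le_one fun p => ?_
    have : (inr ℝ ℝ ℝ) p = ((0 : ℝ), p) := rfl
    rw [this, one_mul, Prod.norm_def]
    simp
  have h2 : ‖iteratedFDeriv ℝ n (f ∘ ⇑(snd ℝ ℝ ℝ)) x‖ ≤ ‖iteratedDeriv n f x.2‖ := by
    rw [(snd ℝ ℝ ℝ).iteratedFDeriv_comp_right hf x hicast]
    refine le_trans (ContinuousMultilinearMap.norm_compContinuousLinearMap_le _ _) ?_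
    rw [← norm_iteratedFDeriv_eq_norm_iteratedDeriv]
    have : ∏ _i : Fin n, ‖snd ℝ ℝ ℝ‖ ≤ 1 :=
      Finset.prod_le_one (fun _ _ => norm_nonneg _) (fun _ _ => norm_snd_le ..)
    calc ‖iteratedFDeriv ℝ n f ((snd ℝ ℝ ℝ) x)‖ * ∏ _i : Fin n, ‖snd ℝ ℝ ℝ‖
        ≤ ‖iteratedFDeriv ℝ n f x.2‖ * 1 := by
          exact mul_le_mul_of_nonneg_left this (norm_nonneg _)
      _ = _ := by rw [mul_one]
  calc ‖inr ℝ ℝ ℝ‖ * ‖iteratedFDeriv ℝ n (f ∘ ⇑(snd ℝ ℝ ℝ)) x‖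
      ≤ 1 * ‖iteratedDeriv n f x.2‖ := mul_le_mul h1 h2 (norm_nonneg _) zero_le_one
    _ = _ := one_mul _

lemma iterDeriv_sinh_formula (b c : ℝ) (n : ℕ) :
    iteratedDeriv (n + 1) (fun α => b * Real.sinh (c * α))
      = fun α => b * c ^ (n + 1) * (if Even n then Real.cosh (c * α) else Real.sinh (c * α)) := by
  induction n with
  | zero =>
    rw [iteratedDeriv_one]
    funext α
    have h : HasDerivAt (fun α : ℝ => b * Real.sinh (c * α)) (b * (c * Real.cosh (c * α))) α := by
      have := ((hasDerivAt_id α).const_mul c).sinh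
      simpa [mul_comm] using (this.const_mul b)
    rw [h.deriv, if_pos (Even.zero)]
    ring
  | succ n ih =>
    rw [iteratedDeriv_succ, ih]
    funext α
    rcases Nat.even_or_odd n with he | ho
    · have h : HasDerivAt (fun α : ℝ => b * c ^ (n + 1) * Real.cosh (c * α))
          (b * c ^ (n + 1) * (c * Real.sinh (c * α))) α := by
        have := ((hasDerivAt_id α).const_mul c).cosh
        simpa [mul_comm] using (this.const_mul (b * c ^ (n + 1)))
      have : deriv (fun α : ℝ => b * c ^ (n+1) *
          (if Even n then Real.cosh (c * α) else Real.sinh (c * α))) α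
          = b * c ^ (n + 1) * (c * Real.sinh (c * α)) := by
        simp only [if_pos he]
        exact h.deriv
      rw [this]
      have hne : ¬ Even (n + 1) := by simp [Nat.even_add_one, he]
      rw [if_neg hne]
      ring
    · have he' : ¬ Even n := by simp [Nat.not_even_iff_odd, ho]
      have h : HasDerivAt (fun α : ℝ => b * c ^ (n + 1) * Real.sinh (c * α))
          (b * c ^ (n + 1) * (c * Real.cosh (c * α))) α := by
        have := ((hasDerivAt_id α).const_mul c).sinh
        simpa [mul_comm] using (this.const_mul (b * c ^ (n + 1)))
      have : deriv (fun α : ℝ => b * c ^ (n+1) *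
          (if Even n then Real.cosh (c * α) else Real.sinh (c * α))) α
          = b * c ^ (n + 1) * (c * Real.cosh (c * α)) := by
        simp only [if_neg he']
        exact h.deriv
      rw [this]
      have hev : Even (n + 1) := by simpa [Nat.even_add_one] using he'
      rw [if_pos hev]
      ring

lemma cosh_le_exp_abs (t : ℝ) : Real.cosh t ≤ Real.exp |t| := by
  rw [Real.cosh_eq]
  have h1 : Real.exp t ≤ Real.exp |t| := Real.exp_le_exp.2 (le_abs_self t)
  have h2 : Real.exp (-t) ≤ Real.exp |t| := Real.exp_le_exp.2 (neg_le_abs t)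
  linarith

lemma abs_sinh_le_exp_abs (t : ℝ) : |Real.sinh t| ≤ Real.exp |t| := by
  rw [Real.abs_sinh]
  calc Real.sinh |t| ≤ Real.cosh |t| := Real.sinh_lt_cosh _ |>.le
  _ ≤ Real.exp |t| := by simpa using cosh_le_exp_abs |t|

lemma iterDeriv_sinh_bound {b c : ℝ} (hb : 0 ≤ b) (hc : 0 < c) (n : ℕ) (α : ℝ) :
    |iteratedDeriv (n + 1) (fun α => b * Real.sinh (c * α)) α| ≤
      b * c ^ (n + 1) * Real.exp (c * |α|) := by
  rw [iterDeriv_sinh_formula]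
  simp only []
  have hca : |c * α| = c * |α| := by rw [abs_mul, abs_of_pos hc]
  beta_reduce
  rcases em (Even n) with he | he
  · rw [if_pos he, abs_mul]
    have h1 : |Real.cosh (c * α)| ≤ Real.exp (c * |α|) := by
      rw [abs_of_pos (Real.cosh_pos _)]
      simpa [hca] using cosh_le_exp_abs (c * α)
    have h2 : |b * c ^ (n+1)| = b * c ^ (n+1) := abs_of_nonneg (by positivity)
    rw [h2]
    exact mul_le_mul_of_nonneg_left h1 (by positivity)
  · rw [if_neg he, abs_mul]
    have h1 : |Real.sinh (c * α)| ≤ Real.exp (c * |α|) := by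
      simpa [hca] using abs_sinh_le_exp_abs (c * α)
    have h2 : |b * c ^ (n+1)| = b * c ^ (n+1) := abs_of_nonneg (by positivity)
    rw [h2]
    exact mul_le_mul_of_nonneg_left h1 (by positivity)

noncomputable def sqf (c : ℝ) : ℝ → ℝ := fun β => Real.sqrt (1 + (c * β) ^ 2)
noncomputable def Wf (c : ℝ) : ℝ → ℝ := fun β => (sqf c β)⁻¹
noncomputable def Vf (c : ℝ) : ℝ → ℝ := fun β => c * β * Wf c β

lemma sq_pos (c β : ℝ) : 0 < sqf c β := Real.sqrt_pos.2 (by positivity)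

lemma sq_sq (c β : ℝ) : sqf c β ^ 2 = 1 + (c * β) ^ 2 := Real.sq_sqrt (by positivity)

lemma one_le_sq (c β : ℝ) : 1 ≤ sqf c β := by
  have := Real.sqrt_le_sqrt (show (1:ℝ) ≤ 1 + (c*β)^2 by nlinarith)
  simpa [sqf] using this

lemma absW_le (c β : ℝ) : |Wf c β| ≤ 1 := by
  rw [Wf, abs_inv, abs_of_pos (sq_pos c β)]
  exact inv_le_one_of_one_le₀ (one_le_sq c β)

lemma absV_le (c β : ℝ) : |Vf c β| ≤ 1 := by
  rw [Vf, abs_mul]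
  show |c * β| * |(sqf c β)⁻¹| ≤ 1
  rw [abs_inv, abs_of_pos (sq_pos c β)]
  have hle : |c * β| ≤ sqf c β := by
    calc |c * β| = Real.sqrt ((c*β)^2) := (Real.sqrt_sq_eq_abs _).symm
    _ ≤ sqf c β := Real.sqrt_le_sqrt (by nlinarith)
  calc |c * β| * (sqf c β)⁻¹ ≤ sqf c β * (sqf c β)⁻¹ :=
        mul_le_mul_of_nonneg_right hle (inv_nonneg.2 (sq_pos c β).le)
  _ = 1 := mul_inv_cancel₀ (sq_pos c β).ne'

lemma hasDerivAt_sq (c β : ℝ) : HasDerivAt (sqf c) (c * (c * β) * Wf c β) β := by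
  have h0 : HasDerivAt (fun β : ℝ => 1 + (c * β) ^ 2) (2 * (c * β) ^ 1 * c) β := by
    have := (((hasDerivAt_id β).const_mul c).pow 2).const_add 1
    simpa using this
  have h := h0.sqrt (by positivity)
  refine h.congr_deriv (Eq.symm ?_)
  have hs := sq_pos c β
  rw [Wf]
  field_simp [sqf]
  simp only [sqf]
  ring_nf

lemma hasDerivAt_W (c β : ℝ) : HasDerivAt (Wf c) (-(c * Vf c β * Wf c β ^ 2)) β := by
  have h := (hasDerivAt_sq c β).inv (ne_of_gt (sq_pos c β))
  refine h.congr_deriv (Eq.symm ?_)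
  have hs := (sq_pos c β).ne'
  rw [Vf, Wf]
  field_simp

lemma hasDerivAt_V (c β : ℝ) : HasDerivAt (Vf c) (c * Wf c β ^ 3) β := by
  have h := ((hasDerivAt_id β).const_mul c).mul (hasDerivAt_W c β)
  refine h.congr_deriv (Eq.symm ?_)
  have hW2 : Wf c β ^ 2 * (1 + (c * β) ^ 2) = 1 := by
    rw [Wf, ← sq_sq c β, inv_pow]
    exact inv_mul_cancel₀ (pow_ne_zero _ (sq_pos c β).ne')
  simp only [id_eq, Vf]
  linear_combination (c * Wf c β) * hW2

noncomputable def Mt (c : ℝ) (t : ℝ × ℕ × ℕ) : ℝ → ℝ :=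
  fun β => t.1 * Vf c β ^ t.2.1 * Wf c β ^ t.2.2

noncomputable def Lt (c : ℝ) (l : List (ℝ × ℕ × ℕ)) : ℝ → ℝ :=
  fun β => (l.map (fun t => Mt c t β)).sum

def dstep (c : ℝ) (t : ℝ × ℕ × ℕ) : List (ℝ × ℕ × ℕ) :=
  [(t.1 * t.2.1 * c, t.2.1 - 1, t.2.2 + 3), (-(t.1 * t.2.2 * c), t.2.1 + 1, t.2.2 + 1)]

def dlist (c : ℝ) (l : List (ℝ × ℕ × ℕ)) : List (ℝ × ℕ × ℕ) := l.flatMap (dstep c)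

lemma hasDerivAt_Mt (c : ℝ) (t : ℝ × ℕ × ℕ) (β : ℝ) :
    HasDerivAt (Mt c t) (Lt c (dstep c t) β) β := by
  obtain ⟨r, a, b⟩ := t
  have h := ((((hasDerivAt_V c β).pow a).const_mul r).mul ((hasDerivAt_W c β).pow b))
  have heq : Mt c (r, a, b) = fun β => r * Vf c β ^ a * Wf c β ^ b := rfl
  rw [heq]
  refine h.congr_deriv (Eq.symm ?_)
  simp only [Lt, dstep, Mt, Pi.pow_apply, List.map_cons, List.map_nil, List.sum_cons, List.sum_nil, add_zero]
  rcases a with _ | a <;> rcases b with _ | b <;>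
    · push_cast
      simp only [Nat.add_sub_cancel, Nat.zero_sub, pow_zero, pow_succ]
      ring

lemma hasDerivAt_Lt (c : ℝ) (l : List (ℝ × ℕ × ℕ)) (β : ℝ) :
    HasDerivAt (Lt c l) (Lt c (dlist c l) β) β := by
  induction l with
  | nil => exact hasDerivAt_const β (0 : ℝ)
  | cons t l ih =>
    have h := (hasDerivAt_Mt c t β).add ih
    have h1 : Lt c (t :: l) = fun β => Mt c t β + Lt c l β := by
      funext β; simp [Lt]
    have h2 : Lt c (dlist c (t :: l)) β = Lt c (dstep c t) β + Lt c (dlist c l) β := by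
      simp [Lt, dlist, List.flatMap_cons]
    rw [h1, h2]
    exact h

lemma abs_Lt_le (c : ℝ) (l : List (ℝ × ℕ × ℕ)) (β : ℝ) :
    |Lt c l β| ≤ (l.map (fun t => |t.1|)).sum := by
  induction l with
  | nil => simp [Lt]
  | cons t l ih =>
    have h1 : Lt c (t :: l) β = Mt c t β + Lt c l β := by simp [Lt]
    rw [h1, List.map_cons, List.sum_cons]
    refine le_trans (abs_add_le _ _) (add_le_add ?_ ih)
    rw [Mt, abs_mul, abs_mul, abs_pow, abs_pow]
    calc |t.1| * |Vf c β| ^ t.2.1 * |Wf c β| ^ t.2.2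
        ≤ |t.1| * 1 * 1 := by
          gcongr
          · exact pow_le_one₀ (abs_nonneg _) (absV_le c β)
          · exact pow_le_one₀ (abs_nonneg _) (absW_le c β)
      _ = |t.1| := by ring

lemma iterDeriv_W (c : ℝ) (n : ℕ) : ∃ l, iteratedDeriv n (Wf c) = Lt c l := by
  induction n with
  | zero =>
    refine ⟨[(1, 0, 1)], ?_⟩
    funext β
    simp [Lt, Mt]
  | succ n ih =>
    obtain ⟨l, hl⟩ := ih
    refine ⟨dlist c l, ?_⟩
    rw [iteratedDeriv_succ, hl]
    funext β
    exact (hasDerivAt_Lt c l β).deriv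

lemma iterDeriv_W_bound (c : ℝ) (n : ℕ) : ∃ C, ∀ β, |iteratedDeriv n (Wf c) β| ≤ C := by
  obtain ⟨l, hl⟩ := iterDeriv_W c n
  exact ⟨_, fun β => by rw [hl]; exact abs_Lt_le c l β⟩

lemma contDiff_W (c : ℝ) : ContDiff ℝ (⊤ : ℕ∞) (Wf c) := by
  have h1 : ContDiff ℝ (⊤ : ℕ∞) (sqf c) := by
    apply ContDiff.sqrt
    · fun_prop
    · intro β; positivity
  exact h1.inv (fun β => (sq_pos c β).ne')

lemma abs_arsinh_le (t : ℝ) : |Real.arsinh t| ≤ |t| := by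
  have h1 : |Real.arsinh t| ≤ Real.sinh |Real.arsinh t| := by
    rcases eq_or_lt_of_le (abs_nonneg (Real.arsinh t)) with h | h
    · simp [← h]
    · exact (Real.self_lt_sinh_iff.2 h).le
  calc |Real.arsinh t| ≤ Real.sinh |Real.arsinh t| := h1
  _ = |Real.sinh (Real.arsinh t)| := (Real.abs_sinh _).symm
  _ = |t| := by rw [Real.sinh_arsinh]

lemma hasDerivAt_g {ℏ : ℝ} (hℏ : 0 < ℏ) (β : ℝ) :
    HasDerivAt (fun β => 2 / ℏ * Real.arsinh (ℏ * β / 2)) ((Real.sqrt (1 + (ℏ/2*β)^2))⁻¹) β := by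
  have h1 : HasDerivAt (fun β : ℝ => ℏ * β / 2) (ℏ / 2) β := by
    simpa using ((hasDerivAt_id β).const_mul ℏ).div_const 2
  have h2 := (Real.hasDerivAt_arsinh (ℏ * β / 2)).comp β h1
  have h3 := h2.const_mul (2 / ℏ)
  refine h3.congr_deriv (Eq.symm ?_)
  have harg : ℏ / 2 * β = ℏ * β / 2 := by ring
  rw [harg]
  field_simp

lemma exp_lower {c t : ℝ} (hc : 0 < c) (ht : 0 ≤ t) :
    min 1 (1 / (2 * c)) * Real.exp (c * t) ≤ 1 + 1 / c * Real.sinh (c * t) := by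
  set u := c * t with hu
  have hu0 : 0 ≤ u := by positivity
  have hsinh : (Real.exp u - 1) / 2 ≤ Real.sinh u := by
    rw [Real.sinh_eq]
    have : Real.exp (-u) ≤ 1 := Real.exp_le_one_iff.2 (by linarith)
    linarith
  have hexp1 : 1 ≤ Real.exp u := Real.one_le_exp hu0
  rcases le_total 1 (2 * c) with h | h
  · have hmin : min 1 (1 / (2 * c)) ≤ 1 / (2 * c) := min_le_right _ _
    have key : 1 / (2 * c) * Real.exp u ≤ 1 + 1 / c * Real.sinh u := by
      have h2 : 1 / c * ((Real.exp u - 1) / 2) ≤ 1 / c * Real.sinh u :=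
        mul_le_mul_of_nonneg_left hsinh (by positivity)
      have h3 : 1 / (2 * c) * Real.exp u ≤ 1 + 1 / c * ((Real.exp u - 1) / 2) := by
        have hkey : 1 + 1 / c * ((Real.exp u - 1) / 2) - 1 / (2 * c) * Real.exp u
            = 1 - 1 / (2 * c) := by ring
        have h5 : 1 / (2 * c) ≤ 1 := by
          rw [div_le_one (by positivity)]; linarith
        linarith
      linarith
    calc min 1 (1 / (2 * c)) * Real.exp u ≤ 1 / (2 * c) * Real.exp u :=
          mul_le_mul_of_nonneg_right hmin (Real.exp_pos u).le
    _ ≤ _ := key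
  · have hmin : min 1 (1 / (2 * c)) ≤ 1 := min_le_left _ _
    have key : 1 * Real.exp u ≤ 1 + 1 / c * Real.sinh u := by
      have h2 : 1 / c * ((Real.exp u - 1) / 2) ≤ 1 / c * Real.sinh u :=
        mul_le_mul_of_nonneg_left hsinh (by positivity)
      have h3 : 1 * Real.exp u ≤ 1 + 1 / c * ((Real.exp u - 1) / 2) := by
        have h4 : 1 ≤ 1 / (2 * c) := by
          rw [le_div_iff₀ (by positivity)]; linarith
        have hkey : 1 + 1 / c * ((Real.exp u - 1) / 2) - 1 * Real.exp u
            = (Real.exp u - 1) * (1 / (2 * c) - 1) := by ring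
        nlinarith [mul_nonneg (by linarith : (0:ℝ) ≤ Real.exp u - 1) (by linarith : (0:ℝ) ≤ 1 / (2*c) - 1)]
      linarith
    calc min 1 (1 / (2 * c)) * Real.exp u ≤ 1 * Real.exp u :=
          mul_le_mul_of_nonneg_right hmin (Real.exp_pos u).le
    _ ≤ _ := key
set_option maxHeartbeats 1000000 in
/-- For φ_ℏ(a,α) = (a, (2/ℏ)sinh(ℏα/2)) with ℏ > 0: the composition of any
Schwartz function with φ_ℏ is Schwartz, φ_ℏ is smooth, and its inverse
(a,β) ↦ (a, (2/ℏ)arcsinh(ℏβ/2)) is smooth with all derivatives of polynomial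
growth. -/
theorem stmt18 (ℏ : ℝ) (hℏ : 0 < ℏ) :
    let φ : ℝ × ℝ → ℝ × ℝ := fun p => (p.1, (2 / ℏ) * Real.sinh (ℏ * p.2 / 2))
    let ψ : ℝ × ℝ → ℝ × ℝ := fun p => (p.1, (2 / ℏ) * Real.arsinh (ℏ * p.2 / 2))
    (∀ u : SchwartzMap (ℝ × ℝ) ℂ, ∃ v : SchwartzMap (ℝ × ℝ) ℂ, ∀ p, v p = u (φ p)) ∧
    ContDiff ℝ (⊤ : ℕ∞) φ ∧
    Function.HasTemperateGrowth ψ ∧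
    Function.LeftInverse ψ φ ∧ Function.RightInverse ψ φ := by
  intro φ ψ
  have hℏ0 : ℏ ≠ 0 := hℏ.ne'
  -- smoothness of φ (analytic level ⊤)
  have hφtop : ContDiff ℝ (⊤ : ℕ∞) φ := by
    apply contDiff_fst.prodMk
    exact contDiff_const.mul
      (Real.contDiff_sinh.comp ((contDiff_const.mul contDiff_snd).div_const 2))
  have hphiI : ContDiff ℝ ∞ φ := hφtop.of_le (by simp)
  -- the 1d components
  have hsI : ContDiff ℝ ∞ (fun α : ℝ => 2 / ℏ * Real.sinh (ℏ * α / 2)) :=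
    contDiff_const.mul
      (Real.contDiff_sinh.comp ((contDiff_const.mul contDiff_id).div_const 2))
  have hgI : ContDiff ℝ ∞ (fun β : ℝ => 2 / ℏ * Real.arsinh (ℏ * β / 2)) :=
    contDiff_const.mul
      (Real.contDiff_arsinh.comp ((contDiff_const.mul contDiff_id).div_const 2))
  -- left inverse
  have hleft : Function.LeftInverse ψ φ := by
    intro p
    show (_, _) = p
    have harg : ℏ * (2 / ℏ * Real.sinh (ℏ * p.2 / 2)) / 2 = Real.sinh (ℏ * p.2 / 2) := by
      field_simp
    refine Prod.ext rfl ?_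
    show 2 / ℏ * Real.arsinh (ℏ * (2 / ℏ * Real.sinh (ℏ * p.2 / 2)) / 2) = p.2
    rw [harg, Real.arsinh_sinh]
    field_simp
  have hright : Function.RightInverse ψ φ := by
    intro p
    have harg : ℏ * (2 / ℏ * Real.arsinh (ℏ * p.2 / 2)) / 2 = Real.arsinh (ℏ * p.2 / 2) := by
      field_simp
    refine Prod.ext rfl ?_
    show 2 / ℏ * Real.sinh (ℏ * (2 / ℏ * Real.arsinh (ℏ * p.2 / 2)) / 2) = p.2
    rw [harg, Real.sinh_arsinh]
    field_simp
  -- temperate growth of ψ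
  have habsg : ∀ β : ℝ, |2 / ℏ * Real.arsinh (ℏ * β / 2)| ≤ |β| := by
    intro β
    rw [abs_mul]
    have h1 : |Real.arsinh (ℏ * β / 2)| ≤ |ℏ * β / 2| := abs_arsinh_le _
    calc |2 / ℏ| * |Real.arsinh (ℏ * β / 2)| ≤ |2 / ℏ| * |ℏ * β / 2| :=
          mul_le_mul_of_nonneg_left h1 (abs_nonneg _)
    _ = |2 / ℏ * (ℏ * β / 2)| := (abs_mul _ _).symm
    _ = |β| := by rw [show 2 / ℏ * (ℏ * β / 2) = β by field_simp]
  have hψtemp : Function.HasTemperateGrowth ψ := by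
    constructor
    · exact contDiff_fst.prodMk (hgI.comp contDiff_snd)
    · intro n
      match n with
      | 0 =>
        refine ⟨1, 1, fun x => ?_⟩
        rw [norm_iteratedFDeriv_zero]
        have : ‖ψ x‖ ≤ ‖x‖ := by
          rw [Prod.norm_def]
          apply max_le
          · exact norm_fst_le x
          · calc ‖(ψ x).2‖ = |2 / ℏ * Real.arsinh (ℏ * x.2 / 2)| := rfl
            _ ≤ |x.2| := habsg x.2
            _ ≤ ‖x‖ := norm_snd_le x
        calc ‖ψ x‖ ≤ ‖x‖ := this
        _ ≤ 1 * (1 + ‖x‖) ^ 1 := by simp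
      | (m + 1) =>
        obtain ⟨C, hC⟩ := iterDeriv_W_bound (ℏ / 2) m
        refine ⟨0, 1 + C, fun x => ?_⟩
        have hb := pair_iter_bound (f := fun β : ℝ => 2 / ℏ * Real.arsinh (ℏ * β / 2))
          hgI (Nat.succ_le_succ (Nat.zero_le m)) x
        have hderiv : deriv (fun β : ℝ => 2 / ℏ * Real.arsinh (ℏ * β / 2)) = Wf (ℏ / 2) :=
          funext fun β => (hasDerivAt_g hℏ β).deriv
        have hiter : iteratedDeriv (m + 1) (fun β : ℝ => 2 / ℏ * Real.arsinh (ℏ * β / 2)) x.2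
            = iteratedDeriv m (Wf (ℏ / 2)) x.2 := by
          rw [iteratedDeriv_succ', hderiv]
        calc ‖iteratedFDeriv ℝ (m + 1) ψ x‖
            ≤ 1 + ‖iteratedDeriv (m + 1) (fun β : ℝ => 2 / ℏ * Real.arsinh (ℏ * β / 2)) x.2‖ := hb
          _ ≤ 1 + C := by
              rw [hiter, Real.norm_eq_abs]
              linarith [hC x.2]
          _ ≤ (1 + C) * (1 + ‖x‖) ^ 0 := by simp
  refine ⟨?_, hφtop, hψtemp, hleft, hright⟩
  -- Schwartz composition
  intro u
  refine ⟨⟨fun p => u (φ p), (u.smooth ⊤).comp hphiI, ?_⟩, fun p => rfl⟩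
  intro k n
  have hc : (0:ℝ) < ℏ / 2 := by positivity
  set Mn : ℝ := 1 + 2 / ℏ * (max 1 (ℏ / 2)) ^ n with hMndef
  have hMn1 : (1:ℝ) ≤ Mn := le_add_of_nonneg_right (by positivity)
  set K : ℝ := 1 + 2 / ℏ with hKdef
  have hK0 : (0:ℝ) < K := by positivity
  set ε : ℝ := min 1 (1 / ℏ) with hεdef
  have hε : (0:ℝ) < ε := lt_min one_pos (by positivity)
  set M : ℕ := 2 * k + n with hMdef
  set S : ℝ := 2 ^ M * ((Finset.Iic (M, n)).sup (fun p => SchwartzMap.seminorm ℝ p.1 p.2)) u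
    with hSdef
  have hS0 : 0 ≤ S := mul_nonneg (by positivity) (apply_nonneg _ _)
  refine ⟨((n.factorial : ℝ)) * S * K ^ k * Mn ^ n * (ε⁻¹) ^ (k + n), fun x => ?_⟩
  set E : ℝ := Real.exp (ℏ / 2 * |x.2|) with hEdef
  have hE1 : (1:ℝ) ≤ E := Real.one_le_exp (by positivity)
  have hE0 : (0:ℝ) < E := lt_of_lt_of_le one_pos hE1
  set P : ℝ := 1 + ‖φ x‖ with hPdef
  have hP1 : (1:ℝ) ≤ P := le_add_of_nonneg_right (norm_nonneg _)
  have hP0 : (0:ℝ) < P := lt_of_lt_of_le one_pos hP1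
  -- derivative bounds for φ
  have hMnE1 : (1:ℝ) ≤ Mn * E := by nlinarith
  have hD : ∀ i, 1 ≤ i → i ≤ n → ‖iteratedFDeriv ℝ i φ x‖ ≤ (Mn * E) ^ i := by
    intro i h1 h2
    obtain ⟨j, rfl⟩ : ∃ j, i = j + 1 := ⟨i - 1, by omega⟩
    have hpair := pair_iter_bound (f := fun α : ℝ => 2 / ℏ * Real.sinh (ℏ * α / 2)) hsI h1 x
    have hfeq : (fun α : ℝ => 2 / ℏ * Real.sinh (ℏ * α / 2))
        = fun α : ℝ => 2 / ℏ * Real.sinh (ℏ / 2 * α) := by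
      funext α; congr 1; ring
    have hb := iterDeriv_sinh_bound (b := 2 / ℏ) (c := ℏ / 2) (by positivity) hc j x.2
    have hstep : ‖iteratedDeriv (j + 1) (fun α : ℝ => 2 / ℏ * Real.sinh (ℏ * α / 2)) x.2‖
        ≤ 2 / ℏ * (ℏ / 2) ^ (j + 1) * E := by
      rw [Real.norm_eq_abs, hfeq]
      exact hb
    have hcoef : 2 / ℏ * (ℏ / 2) ^ (j + 1) ≤ 2 / ℏ * (max 1 (ℏ / 2)) ^ n := by
      have h3 : (ℏ / 2) ^ (j + 1) ≤ (max 1 (ℏ / 2)) ^ (j + 1) :=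
        pow_le_pow_left₀ hc.le (le_max_right _ _) _
      have h4 : (max 1 (ℏ / 2)) ^ (j + 1) ≤ (max 1 (ℏ / 2)) ^ n :=
        pow_le_pow_right₀ (le_max_left _ _) h2
      have h5 : (0:ℝ) ≤ 2 / ℏ := by positivity
      nlinarith
    have hDx1 : ‖iteratedFDeriv ℝ (j + 1) φ x‖ ≤ Mn * E := by
      have h6 : 2 / ℏ * (ℏ / 2) ^ (j + 1) * E ≤ 2 / ℏ * (max 1 (ℏ / 2)) ^ n * E :=
        mul_le_mul_of_nonneg_right hcoef hE0.le
      calc ‖iteratedFDeriv ℝ (j + 1) φ x‖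
          ≤ 1 + ‖iteratedDeriv (j + 1) (fun α : ℝ => 2 / ℏ * Real.sinh (ℏ * α / 2)) x.2‖ := hpair
        _ ≤ 1 + 2 / ℏ * (max 1 (ℏ / 2)) ^ n * E := by
            have := le_trans hstep h6
            linarith
        _ ≤ Mn * E := by
            rw [hMndef]
            nlinarith [mul_nonneg (show (0:ℝ) ≤ 2 / ℏ * (max 1 (ℏ / 2)) ^ n by positivity)
              (hE0.le)]
    calc ‖iteratedFDeriv ℝ (j + 1) φ x‖ ≤ Mn * E := hDx1
      _ ≤ (Mn * E) ^ (j + 1) := le_self_pow₀ hMnE1 (Nat.succ_ne_zero j)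
  -- Schwartz seminorm bounds for u at φ x
  have hPM : (0:ℝ) < P ^ M := pow_pos hP0 M
  have hu : ∀ i, i ≤ n → ‖iteratedFDeriv ℝ i u (φ x)‖ ≤ S * (P ^ M)⁻¹ := by
    intro i hi
    have h7 := SchwartzMap.one_add_le_sup_seminorm_apply (𝕜 := ℝ) (m := (M, n))
      (le_refl M) hi u (φ x)
    have h8 : P ^ M * ‖iteratedFDeriv ℝ i u (φ x)‖ ≤ S := h7
    calc ‖iteratedFDeriv ℝ i u (φ x)‖
        = P ^ M * ‖iteratedFDeriv ℝ i u (φ x)‖ * (P ^ M)⁻¹ := by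
          field_simp
      _ ≤ S * (P ^ M)⁻¹ := mul_le_mul_of_nonneg_right h8 (inv_nonneg.2 hPM.le)
  -- Faà di Bruno bound
  have hFdB : ‖iteratedFDeriv ℝ n (fun p => u (φ p)) x‖
      ≤ ((n.factorial : ℝ)) * (S * (P ^ M)⁻¹) * (Mn * E) ^ n := by
    have h9 := norm_iteratedFDeriv_comp_le (g := (u : (ℝ × ℝ) → ℂ)) (f := φ) (N := ∞)
      (u.smooth ⊤) hphiI (by exact_mod_cast le_top) x hu hD
    exact h9
  -- exponential domination inequalities
  have hf1 : 1 + |x.1| ≤ P := by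
    have h15 : ‖(φ x).1‖ ≤ ‖φ x‖ := norm_fst_le (φ x)
    have h16 : ‖(φ x).1‖ = |x.1| := rfl
    rw [h16] at h15
    linarith
  have hf2 : ε * E ≤ P := by
    have h10 := exp_lower (c := ℏ / 2) hc (abs_nonneg x.2)
    have e1 : 2 * (ℏ / 2) = ℏ := by ring
    have e2 : 1 / (ℏ / 2) = 2 / ℏ := by
      field_simp
    have e3 : Real.sinh (ℏ / 2 * |x.2|) = |Real.sinh (ℏ * x.2 / 2)| := by
      rw [Real.abs_sinh]
      congr 1
      rw [abs_div, abs_mul, abs_of_pos hℏ, abs_two]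
      ring
    rw [e1, e2, e3] at h10
    have h11 : 2 / ℏ * |Real.sinh (ℏ * x.2 / 2)| ≤ ‖φ x‖ := by
      have h12 : ‖(φ x).2‖ ≤ ‖φ x‖ := norm_snd_le (φ x)
      have h13 : ‖(φ x).2‖ = 2 / ℏ * |Real.sinh (ℏ * x.2 / 2)| := by
        show |2 / ℏ * Real.sinh (ℏ * x.2 / 2)| = _
        rw [abs_mul, abs_of_pos (show (0:ℝ) < 2 / ℏ by positivity)]
      rw [h13] at h12
      exact h12
    rw [hεdef, hEdef, hPdef]
    linarith
  have hf3 : 1 + |x.2| ≤ K * E := by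
    have hexp : ℏ / 2 * |x.2| + 1 ≤ E := Real.add_one_le_exp _
    have hy : 2 / ℏ * (ℏ / 2) = 1 := by field_simp
    have h5 : (1 + 2 / ℏ) * (ℏ / 2 * |x.2| + 1) ≤ (1 + 2 / ℏ) * E :=
      mul_le_mul_of_nonneg_left hexp (by positivity)
    have h6 : 2 / ℏ * (ℏ / 2) * |x.2| = |x.2| := by rw [hy, one_mul]
    rw [hKdef]
    nlinarith [abs_nonneg x.2, mul_nonneg hc.le (abs_nonneg x.2),
      (show (0:ℝ) ≤ 2 / ℏ by positivity), h5, h6]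
  have hxnorm : ‖x‖ ≤ (1 + |x.1|) * (1 + |x.2|) := by
    rw [Prod.norm_def]
    apply max_le
    · rw [Real.norm_eq_abs]
      nlinarith [abs_nonneg x.1, abs_nonneg x.2, mul_nonneg (abs_nonneg x.1) (abs_nonneg x.2)]
    · rw [Real.norm_eq_abs]
      nlinarith [abs_nonneg x.1, abs_nonneg x.2, mul_nonneg (abs_nonneg x.1) (abs_nonneg x.2)]
  -- final assembly
  have step1 : ‖x‖ ^ k ≤ (P * (K * E)) ^ k := by
    apply pow_le_pow_left₀ (norm_nonneg x)
    calc ‖x‖ ≤ (1 + |x.1|) * (1 + |x.2|) := hxnorm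
      _ ≤ P * (K * E) := by
          apply mul_le_mul hf1 hf3 (by positivity) hP0.le
  have step2 : ‖x‖ ^ k * ‖iteratedFDeriv ℝ n (fun p => u (φ p)) x‖
      ≤ (P * (K * E)) ^ k * (((n.factorial : ℝ)) * (S * (P ^ M)⁻¹) * (Mn * E) ^ n) :=
    mul_le_mul step1 hFdB (norm_nonneg _) (by positivity)
  have hEP : E ≤ P * ε⁻¹ := by
    rw [mul_comm, ← div_eq_inv_mul]
    rw [le_div_iff₀ hε]
    linarith [hf2]
  have step3 : (P * (K * E)) ^ k * (((n.factorial : ℝ)) * (S * (P ^ M)⁻¹) * (Mn * E) ^ n)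
      = ((n.factorial : ℝ)) * S * K ^ k * Mn ^ n * (E ^ (k + n) * P ^ k * (P ^ M)⁻¹) := by
    rw [mul_pow, mul_pow, mul_pow, pow_add]
    ring
  have hPP : P ^ (k + n) * P ^ k = P ^ M := by
    rw [← pow_add, hMdef]
    congr 1
    omega
  have step4 : E ^ (k + n) * P ^ k * (P ^ M)⁻¹ ≤ (ε⁻¹) ^ (k + n) := by
    calc E ^ (k + n) * P ^ k * (P ^ M)⁻¹ ≤ (P * ε⁻¹) ^ (k + n) * P ^ k * (P ^ M)⁻¹ := by
          have h14 : E ^ (k + n) ≤ (P * ε⁻¹) ^ (k + n) := pow_le_pow_left₀ hE0.le hEP _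
          apply mul_le_mul_of_nonneg_right (mul_le_mul_of_nonneg_right h14 (pow_nonneg hP0.le _))
            (inv_nonneg.2 hPM.le)
      _ = (ε⁻¹) ^ (k + n) * (P ^ (k + n) * P ^ k * (P ^ M)⁻¹) := by
          rw [mul_pow]
          ring
      _ = (ε⁻¹) ^ (k + n) := by
          rw [hPP, mul_inv_cancel₀ hPM.ne', mul_one]
  calc ‖x‖ ^ k * ‖iteratedFDeriv ℝ n (fun p => u (φ p)) x‖
      ≤ ((n.factorial : ℝ)) * S * K ^ k * Mn ^ n * (E ^ (k + n) * P ^ k * (P ^ M)⁻¹) := by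
        rw [← step3]; exact step2
    _ ≤ ((n.factorial : ℝ)) * S * K ^ k * Mn ^ n * (ε⁻¹) ^ (k + n) := by
        apply mul_le_mul_of_nonneg_left step4
        have : (0:ℝ) ≤ ((n.factorial : ℝ)) := Nat.cast_nonneg _
        positivity
end
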